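/- Let d be odd. The parity operator P = (1/d) Σ_{p ∈ (ZMod d)^2} D_{-p} satisfies P^2 = 1, is Hermitian, and has trace 1; consequently P has eigenvalue +1 with multiplicity (d+1)/2 and eigenvalue -1 with multiplicity (d-1)/2. -/

import Mathlib

/-!
Summing the displacement operators over the first coordinate of `p` kills every entry except
those on the anti-diagonal `r + s = 0`, by orthogonality of the powers of the primitive `d`-th
root of unity `τ`; hence `P` is the permutation matrix of `r ↦ -r`. This involution gives
`P² = 1` and `Pᴴ = P`, and for odd `d` its only fixed point is `0`, so `tr P = 1`. Finally
`(1 ± P)/2` are idempotent, so their ranks are their traces `(d ± 1)/2`.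
-/

open Matrix Complex

/-- The Weyl–Heisenberg displacement operators in dimension `d`. -/
noncomputable def Disp (d : ℕ) [NeZero d] (p : ZMod d × ZMod d) :
    Matrix (ZMod d) (ZMod d) ℂ :=
  Matrix.of fun r s =>
    (-Complex.exp (Real.pi * Complex.I / d)) ^ (p.1.val * p.2.val + 2 * p.2.val * s.val) *
      (if r = s + p.1 then 1 else 0)

/-- The parity operator `P = (1/d) ∑_p D_{-p}`. -/
noncomputable def Parity (d : ℕ) [NeZero d] : Matrix (ZMod d) (ZMod d) ℂ :=
  (d : ℂ)⁻¹ • ∑ p : ZMod d × ZMod d, Disp d (-p)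

namespace Matrix

variable {n K : Type*} [Fintype n] [DecidableEq n] [Field K]

theorem IsIdempotentElem.rank_eq_trace {E : Matrix n n K} (hE : IsIdempotentElem E) :
    (E.rank : K) = E.trace := by
  have hlin : IsIdempotentElem (toLin' E) := by
    rw [IsIdempotentElem, Module.End.mul_eq_comp, ← toLin'_mul, hE.eq]
  rw [rank, ← toLin'_apply', ← trace_toLin'_eq,
    (LinearMap.IsIdempotentElem.isProj_range _ hlin).trace]

theorem two_mul_rank_one_add_of_mul_self_eq_one [NeZero (2 : K)] {P : Matrix n n K}
    (hP : P * P = 1) : 2 * ((1 + P).rank : K) = Fintype.card n + P.trace := by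
  have hsq : (1 + P) * (1 + P) = (2 : K) • (1 + P) := by
    simp only [add_mul, mul_add, hP, one_mul, mul_one, two_smul]
    abel
  have hidem : IsIdempotentElem ((2 : K)⁻¹ • (1 + P)) := by
    rw [IsIdempotentElem, smul_mul_smul_comm, hsq, smul_smul, inv_mul_cancel_right₀ two_ne_zero]
  have hrank := hidem.rank_eq_trace
  rw [rank_smul_of_mem_nonZeroDivisors _ (mem_nonZeroDivisors_of_ne_zero (inv_ne_zero two_ne_zero)),
    trace_smul, trace_add, trace_one, smul_eq_mul] at hrank
  rw [hrank, mul_inv_cancel_left₀ two_ne_zero]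

end Matrix

theorem ZMod.fixedPoints_neg {d : ℕ} (hd : Odd d) :
    Function.fixedPoints (Equiv.neg (ZMod d)) = {0} := by
  ext a
  simp only [Function.mem_fixedPoints_iff, Equiv.neg_apply, neg_eq_self_iff,
    Set.mem_singleton_iff]
  have : 2 * a.val ≠ d := fun h => (Nat.not_even_iff_odd.mpr hd) ⟨a.val, by omega⟩
  simp [this]

theorem IsPrimitiveRoot.sum_zmod_pow_val {K : Type*} [Field K] {d : ℕ} [NeZero d] {ζ : K}
    (hζ : IsPrimitiveRoot ζ d) (c : ℕ) :
    ∑ b : ZMod d, (ζ ^ c) ^ b.val = if (c : ZMod d) = 0 then (d : K) else 0 := by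
  have hrange : Finset.univ.image (ZMod.val : ZMod d → ℕ) = Finset.range d := by
    ext i
    simp only [Finset.mem_image, Finset.mem_univ, true_and, Finset.mem_range]
    exact ⟨fun ⟨a, ha⟩ => ha ▸ a.val_lt, fun hi => ⟨i, ZMod.val_cast_of_lt hi⟩⟩
  have hcond : (c : ZMod d) = 0 ↔ ζ ^ c = 1 := by
    rw [ZMod.natCast_eq_zero_iff, hζ.pow_eq_one_iff_dvd]
  rw [← Finset.sum_image (fun a _ b _ h => ZMod.val_injective d h), hrange]
  split_ifs with h <;> rw [hcond] at h
  · simp [h]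
  · rw [geom_sum_eq h, ← pow_mul, mul_comm, pow_mul, hζ.pow_eq_one, one_pow, sub_self, zero_div]

theorem Complex.isPrimitiveRoot_neg_exp_pi_mul_I_div {d : ℕ} (hd : Odd d) :
    IsPrimitiveRoot (-exp (Real.pi * I / d)) d := by
  obtain ⟨k, rfl⟩ := hd
  have hcop : (k + 1).Coprime (2 * k + 1) := by
    rw [show 2 * k + 1 = k + (k + 1) by ring, Nat.coprime_add_self_right]
    simp
  -- `-exp (π i / d) = exp (2 π i (k + 1) / d)` for `d = 2k + 1`
  convert isPrimitiveRoot_exp_of_coprime (k + 1) (2 * k + 1) (by omega) hcop using 1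
  have hd0 : ((2 * k + 1 : ℕ) : ℂ) ≠ 0 := Nat.cast_ne_zero.mpr (by omega)
  rw [← neg_one_mul, ← exp_pi_mul_I, ← exp_add]
  congr 1
  field_simp
  push_cast
  ring

theorem disp_apply (d : ℕ) [NeZero d] (p : ZMod d × ZMod d) (r s : ZMod d) :
    Disp d p r s = if p.1 = r - s then
      ((-exp (Real.pi * I / d)) ^ (p.1.val + 2 * s.val)) ^ p.2.val else 0 := by
  rw [Disp, of_apply, mul_ite, mul_one, mul_zero, ← pow_mul]
  exact if_congr (by rw [eq_sub_iff_add_eq', eq_comm]) (by ring_nf) rfl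

theorem parity_eq_permMatrix_neg (d : ℕ) [NeZero d] (hd : Odd d) :
    Parity d = (Equiv.neg (ZMod d)).permMatrix ℂ := by
  ext r s
  have hneg : ∑ p, Disp d (-p) = ∑ p, Disp d p :=
    Fintype.sum_equiv (Equiv.neg _) _ _ fun _ => rfl
  have hcast : (((r - s).val + 2 * s.val : ℕ) : ZMod d) = r + s := by
    push_cast [ZMod.natCast_val, ZMod.cast_id]
    ring
  rw [Parity, hneg, Matrix.smul_apply, Matrix.sum_apply, Fintype.sum_prod_type]
  simp only [disp_apply, Finset.sum_comm (γ := ZMod d), Finset.sum_ite_eq', Finset.mem_univ,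
    if_true]
  rw [(isPrimitiveRoot_neg_exp_pi_mul_I_div hd).sum_zmod_pow_val, hcast]
  simp [PEquiv.toMatrix_apply, neg_eq_iff_add_eq_zero]

theorem stmt14 (d : ℕ) [NeZero d] (hd : Odd d) :
    Parity d * Parity d = 1 ∧
    (Parity d).IsHermitian ∧
    (Parity d).trace = 1 ∧
    (1 + Parity d).rank = (d + 1) / 2 ∧
    (1 - Parity d).rank = (d - 1) / 2 := by
  have hP := parity_eq_permMatrix_neg d hd
  have hsq : Parity d * Parity d = 1 := by
    rw [hP, ← permMatrix_mul, show Equiv.neg (ZMod d) * Equiv.neg _ = 1 by ext; simp,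
      permMatrix_one]
  have htr : (Parity d).trace = 1 := by
    rw [hP, trace_permutation, ZMod.fixedPoints_neg hd, Set.ncard_singleton, Nat.cast_one]
  have hplus := two_mul_rank_one_add_of_mul_self_eq_one hsq
  have hminus := two_mul_rank_one_add_of_mul_self_eq_one (P := -Parity d) (by rwa [neg_mul_neg])
  rw [htr, ZMod.card] at hplus
  rw [← sub_eq_add_neg, trace_neg, htr, ZMod.card] at hminus
  refine ⟨hsq, ?_, htr, ?_, ?_⟩
  · rw [hP, IsHermitian, conjTranspose_permMatrix, Equiv.Perm.inv_def, Equiv.neg_symm]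
  · have : 2 * (1 + Parity d).rank = d + 1 := by exact_mod_cast hplus
    omega
  · have : 2 * (1 - Parity d).rank + 1 = d := by exact_mod_cast eq_add_neg_iff_add_eq.mp hminus
    omega
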